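/- arXiv:2502.07792 — 3 statements merged into one kernel-verified Lean document; each statement's English description precedes it below -/
import Mathlib

section
/- Let τ₁ ∈ ℝ. Then the conditional expectation of the quality t of an applicant selected by the agent satisfies the closed form E[t | s̃ ≥ τ₁] = ((1−α)·σ_s²/σ_s̃)·H(τ₁/σ_s̃). -/
open MeasureTheory ProbabilityTheory Real

/-- Standard normal density. -/
noncomputable def stdPdf (x : ℝ) : ℝ := (Real.sqrt (2 * Real.pi))⁻¹ * Real.exp (-(x ^ 2) / 2)

/-- Standard normal CDF. -/
noncomputable def stdCdf (x : ℝ) : ℝ := ∫ u in Set.Iic x, stdPdf u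

/-- Standard normal complementary CDF. -/
noncomputable def stdCcdf (x : ℝ) : ℝ := 1 - stdCdf x

/-- Standard normal hazard rate. -/
noncomputable def hazard (x : ℝ) : ℝ := stdPdf x / stdCcdf x

/-- Conditional expectation of `X` given the event `A`: `E[X·1_A]/P(A)`. -/
noncomputable def condMean {Ω : Type*} [MeasurableSpace Ω] (μ : Measure Ω)
    (X : Ω → ℝ) (A : Set Ω) : ℝ :=
  (∫ ω in A, X ω ∂μ) / (μ A).toReal

/-!
The variable `f` is centred and independent of the selection event
`{s + ε_s ≥ τ₁}`, so it contributes nothing. For `s`, the regression decomposition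
`s = (σ_s² / σ_s̃²) s̃ + r` has `r` uncorrelated with `s̃`, hence independent of it because
`(r, s̃)` is jointly Gaussian; this reduces `E[s; s̃ ≥ τ₁]` to `(σ_s² / σ_s̃²) E[s̃; s̃ ≥ τ₁]`.
For a centred Gaussian of variance `v` with density `φ_v`, `φ_v' = -x φ_v / v` gives
`∫_τ^∞ x φ_v(x) dx = v φ_v(τ)`, while `P(s̃ ≥ τ₁) = Φᶜ(τ₁ / σ_s̃)` by scaling.
-/

open Set Filter
open scoped NNReal Topology

lemma gaussianPDFReal_zero_one : gaussianPDFReal 0 1 = stdPdf := by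
  ext x; simp [gaussianPDFReal, stdPdf]

lemma gaussianPDFReal_zero_eq_stdPdf (v : ℝ≥0) (x : ℝ) :
    gaussianPDFReal 0 v x = (√v)⁻¹ * stdPdf (x / √v) := by
  rcases eq_or_ne v 0 with rfl | hv
  · simp
  have hv' : (0 : ℝ) < v := by positivity
  rw [gaussianPDFReal, stdPdf, div_pow, Real.sq_sqrt hv'.le, Real.sqrt_mul (by positivity), mul_inv]
  ring_nf

lemma stdCcdf_eq_gaussianReal_Ioi (x : ℝ) : stdCcdf x = (gaussianReal 0 1).real (Ioi x) := by
  rw [stdCcdf, stdCdf, ← compl_Iic, measureReal_compl measurableSet_Iic, probReal_univ,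
    measureReal_def, gaussianReal_apply_eq_integral 0 one_ne_zero, gaussianPDFReal_zero_one,
    ENNReal.toReal_ofReal (setIntegral_nonneg measurableSet_Iic fun u _ ↦ ?_)]
  rw [← gaussianPDFReal_zero_one]; exact gaussianPDFReal_nonneg _ _ _

lemma measureReal_gaussianReal_Ici {v : ℝ≥0} (hv : v ≠ 0) (τ : ℝ) :
    (gaussianReal 0 v).real (Ici τ) = stdCcdf (τ / √v) := by
  have hsv : (0 : ℝ) < √v := by positivity
  have hscale : gaussianReal 0 v = (gaussianReal 0 1).map (fun x ↦ √v * x) := by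
    rw [gaussianReal_map_const_mul, mul_zero, mul_one]
    congr
    ext; simp
  have hpre : (fun x ↦ √v * x) ⁻¹' Ici τ = Ici (τ / √v) := by
    ext x; simp [div_le_iff₀' hsv]
  have := nullSingletonClass_gaussianReal (μ := 0) one_ne_zero
  rw [hscale, map_measureReal_apply (by fun_prop) measurableSet_Ici, hpre,
    measureReal_congr Ioi_ae_eq_Ici.symm, stdCcdf_eq_gaussianReal_Ioi]

lemma hasDerivAt_gaussianPDFReal (m : ℝ) {v : ℝ≥0} (hv : v ≠ 0) (x : ℝ) :
    HasDerivAt (gaussianPDFReal m v) (-(x - m) / v * gaussianPDFReal m v x) x := by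
  have hv' : (v : ℝ) ≠ 0 := by exact_mod_cast hv
  have hexp : HasDerivAt (fun x ↦ -(x - m) ^ 2 / (2 * v)) (-(x - m) / v) x := by
    refine ((((hasDerivAt_id' x).sub_const m).pow 2).neg.div_const (2 * (v : ℝ))).congr_deriv ?_
    field_simp
    ring
  rw [gaussianPDFReal_def]
  exact (hexp.exp.const_mul (√(2 * π * v))⁻¹).congr_deriv (by ring)

lemma tendsto_gaussianPDFReal_atTop (m : ℝ) (v : ℝ≥0) :
    Tendsto (gaussianPDFReal m v) atTop (𝓝 0) := by
  rcases eq_or_ne v 0 with rfl | hv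
  · rw [gaussianPDFReal_zero_var]
    exact tendsto_const_nhds
  have hv' : (0 : ℝ) < v := by positivity
  have hquad : Tendsto (fun x : ℝ ↦ -(x - m) ^ 2 / (2 * v)) atTop atBot :=
    (tendsto_neg_atTop_atBot.comp
      ((tendsto_pow_atTop two_ne_zero).comp (tendsto_atTop_add_const_right _ (-m) tendsto_id)
        |>.congr fun x ↦ by simp [sub_eq_add_neg])).atBot_div_const (by positivity)
  rw [gaussianPDFReal_def]
  simpa using (Real.tendsto_exp_atBot.comp hquad).const_mul (√(2 * π * v))⁻¹

lemma setIntegral_Ici_id_gaussianReal {v : ℝ≥0} (hv : v ≠ 0) (τ : ℝ) :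
    ∫ x in Ici τ, x ∂gaussianReal 0 v = v * gaussianPDFReal 0 v τ := by
  have hint : Integrable (fun x ↦ x * gaussianPDFReal 0 v x) := by
    have h := (memLp_id_gaussianReal (μ := 0) (v := v) 1).integrable le_rfl
    rw [gaussianReal_of_var_ne_zero _ hv, integrable_withDensity_iff_integrable_smul'
      (measurable_gaussianPDF _ _) (ae_of_all _ fun _ ↦ gaussianPDF_lt_top)] at h
    simpa [mul_comm] using h
  have hderiv : ∀ x ∈ Ioi τ, HasDerivAt (fun x ↦ -v * gaussianPDFReal 0 v x)
      (x * gaussianPDFReal 0 v x) x := fun x _ ↦ by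
    refine ((hasDerivAt_gaussianPDFReal 0 hv x).const_mul (-(v : ℝ))).congr_deriv ?_
    rw [sub_zero]
    field_simp [show (v : ℝ) ≠ 0 by exact_mod_cast hv]
  have hlim : Tendsto (fun x ↦ -v * gaussianPDFReal 0 v x) atTop (𝓝 0) := by
    simpa using (tendsto_gaussianPDFReal_atTop 0 v).const_mul (-(v : ℝ))
  calc ∫ x in Ici τ, x ∂gaussianReal 0 v
      = ∫ x in Ioi τ, x * gaussianPDFReal 0 v x := by
        rw [← integral_indicator measurableSet_Ici, integral_gaussianReal_eq_integral_smul hv,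
          ← integral_Ici_eq_integral_Ioi, ← integral_indicator measurableSet_Ici]
        congr 1; ext x
        by_cases hx : x ∈ Ici τ <;> simp [hx, mul_comm]
    _ = v * gaussianPDFReal 0 v τ := by
        rw [integral_Ioi_of_hasDerivAt_of_tendsto
          ((hasDerivAt_gaussianPDFReal 0 hv τ).continuousAt.const_mul _).continuousWithinAt
          hderiv hint.integrableOn hlim]
        ring

namespace ProbabilityTheory

variable {Ω : Type*} [MeasurableSpace Ω] {μ : Measure Ω}

lemma IndepFun.setIntegral_preimage {β : Type*} [MeasurableSpace β] {X : Ω → ℝ} {Y : Ω → β}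
    (hXY : IndepFun X Y μ) (hX : AEStronglyMeasurable X μ) (hY : Measurable Y) {B : Set β}
    (hB : MeasurableSet B) :
    ∫ ω in Y ⁻¹' B, X ω ∂μ = μ[X] * μ.real (Y ⁻¹' B) := by
  have hind : IndepFun X (B.indicator (1 : β → ℝ) ∘ Y) μ :=
    hXY.comp measurable_id (measurable_one.indicator hB)
  have hone : B.indicator (1 : β → ℝ) ∘ Y = (Y ⁻¹' B).indicator 1 := by
    ext ω; simp [← Set.indicator_comp_right]
  calc ∫ ω in Y ⁻¹' B, X ω ∂μ = μ[X * B.indicator (1 : β → ℝ) ∘ Y] := by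
        rw [← integral_indicator (hY hB), hone]
        congr 1; ext ω
        by_cases hω : ω ∈ Y ⁻¹' B <;> simp [hω]
    _ = μ[X] * μ.real (Y ⁻¹' B) := by
        rw [hind.integral_mul_eq_mul_integral hX
          ((measurable_one.indicator hB).comp hY).aestronglyMeasurable, hone,
          integral_indicator_one (hY hB)]

lemma HasGaussianLaw.setIntegral_preimage_snd {X Y : Ω → ℝ}
    (hXY : HasGaussianLaw (fun ω ↦ (X ω, Y ω)) μ) (hYm : Measurable Y) (hY : Var[Y; μ] ≠ 0)
    {B : Set ℝ} (hB : MeasurableSet B) :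
    ∫ ω in Y ⁻¹' B, X ω ∂μ = cov[X, Y; μ] / Var[Y; μ] * ∫ ω in Y ⁻¹' B, Y ω ∂μ
      + (μ[X] - cov[X, Y; μ] / Var[Y; μ] * μ[Y]) * μ.real (Y ⁻¹' B) := by
  have := hXY.isProbabilityMeasure
  set c := cov[X, Y; μ] / Var[Y; μ]
  have hX2 := hXY.fst.memLp_two
  have hY2 := hXY.snd.memLp_two
  have hRY : HasGaussianLaw (fun ω ↦ (X ω - c * Y ω, Y ω)) μ := by
    simpa using hXY.map_fun
      ((ContinuousLinearMap.fst ℝ ℝ ℝ - c • ContinuousLinearMap.snd ℝ ℝ ℝ).prod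
        (ContinuousLinearMap.snd ℝ ℝ ℝ))
  have hcov : cov[fun ω ↦ X ω - c * Y ω, Y; μ] = 0 := by
    rw [covariance_fun_sub_left hX2 (hY2.const_mul c) hY2, covariance_const_mul_left,
      covariance_self hYm.aemeasurable, div_mul_cancel₀ _ hY, sub_self]
  have hR := (hRY.indepFun_of_covariance_eq_zero hcov).setIntegral_preimage
    (hX2.sub (hY2.const_mul c)).aestronglyMeasurable hYm hB
  calc ∫ ω in Y ⁻¹' B, X ω ∂μ
      = ∫ ω in Y ⁻¹' B, (X ω - c * Y ω) ∂μ + c * ∫ ω in Y ⁻¹' B, Y ω ∂μ := by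
        rw [← integral_const_mul, ← integral_add]
        · simp
        · exact (hX2.sub (hY2.const_mul c)).integrable one_le_two |>.integrableOn
        · exact (hY2.const_mul c).integrable one_le_two |>.integrableOn
    _ = _ := by
        rw [hR, integral_sub (hX2.integrable one_le_two) ((hY2.const_mul c).integrable one_le_two),
          integral_const_mul]
        ring

lemma IndepFun.hasLaw_add_gaussianReal {X Z : Ω → ℝ} (hXZ : IndepFun X Z μ) {m₁ m₂ : ℝ}
    {v₁ v₂ : ℝ≥0} (hX : HasLaw X (gaussianReal m₁ v₁) μ) (hZ : HasLaw Z (gaussianReal m₂ v₂) μ) :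
    HasLaw (fun ω ↦ X ω + Z ω) (gaussianReal (m₁ + m₂) (v₁ + v₂)) μ := by
  simpa [gaussianReal_conv_gaussianReal] using hXZ.hasLaw_fun_add hX hZ

lemma IndepFun.setIntegral_preimage_add_of_gaussianReal {X Z : Ω → ℝ} (hXm : Measurable X)
    (hZm : Measurable Z) (hXZ : IndepFun X Z μ) {a b : ℝ≥0} (hX : HasLaw X (gaussianReal 0 a) μ)
    (hZ : HasLaw Z (gaussianReal 0 b) μ) (hab : a + b ≠ 0) {B : Set ℝ} (hB : MeasurableSet B) :
    ∫ ω in (fun ω ↦ X ω + Z ω) ⁻¹' B, X ω ∂μ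
      = a / (a + b) * ∫ x in B, x ∂gaussianReal 0 (a + b) := by
  have := hX.isProbabilityMeasure
  have hS := hXZ.hasLaw_add_gaussianReal hX hZ
  rw [add_zero] at hS
  have hjoint : HasGaussianLaw (fun ω ↦ (X ω, X ω + Z ω)) μ := by
    simpa using (hXZ.hasGaussianLaw hX.hasGaussianLaw hZ.hasGaussianLaw).map_fun
      ((ContinuousLinearMap.fst ℝ ℝ ℝ).prod
        (ContinuousLinearMap.fst ℝ ℝ ℝ + ContinuousLinearMap.snd ℝ ℝ ℝ))
  have hX2 := hX.hasGaussianLaw.memLp_two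
  have hZ2 := hZ.hasGaussianLaw.memLp_two
  have hvar : Var[fun ω ↦ X ω + Z ω; μ] = a + b := by simp [hS.variance_eq]
  have hcov : cov[X, fun ω ↦ X ω + Z ω; μ] = a := by
    rw [show (fun ω ↦ X ω + Z ω) = X + Z from rfl, covariance_add_right hX2 hX2 hZ2,
      covariance_self hXm.aemeasurable, hXZ.covariance_eq_zero hX2 hZ2, hX.variance_eq]
    simp
  rw [hjoint.setIntegral_preimage_snd (hXm.add hZm) (by rw [hvar]; exact_mod_cast hab) hB,
    hvar, hcov, hX.integral_eq, hS.integral_eq, integral_id_gaussianReal,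
    integral_id_gaussianReal, ← hS.map_eq,
    setIntegral_map hB measurable_id'.aestronglyMeasurable hS.aemeasurable]
  simp

end ProbabilityTheory

theorem delegated_expected_quality_general
    {Ω : Type*} [MeasurableSpace Ω] (μ : Measure Ω) [IsProbabilityMeasure μ]
    (f s e : Ω → ℝ) (hf : Measurable f) (hs : Measurable s) (he : Measurable e)
    (σf σs σe α τ₁ : ℝ) (hσs : 0 < σs)
    (hindep : iIndepFun ![f, s, e] μ)
    (hfd : μ.map f = gaussianReal 0 ((σf ^ 2).toNNReal))
    (hsd : μ.map s = gaussianReal 0 ((σs ^ 2).toNNReal))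
    (hed : μ.map e = gaussianReal 0 ((σe ^ 2).toNNReal)) :
    condMean μ (fun ω => α * f ω + (1 - α) * s ω) {ω | τ₁ ≤ s ω + e ω}
      = ((1 - α) * σs ^ 2 / Real.sqrt (σs ^ 2 + σe ^ 2))
        * hazard (τ₁ / Real.sqrt (σs ^ 2 + σe ^ 2)) := by
  set v := (σs ^ 2).toNNReal + (σe ^ 2).toNNReal
  have hv : v ≠ 0 := by positivity
  have hf' : HasLaw f (gaussianReal 0 (σf ^ 2).toNNReal) μ := ⟨hf.aemeasurable, hfd⟩
  have hs' : HasLaw s (gaussianReal 0 (σs ^ 2).toNNReal) μ := ⟨hs.aemeasurable, hsd⟩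
  have he' : HasLaw e (gaussianReal 0 (σe ^ 2).toNNReal) μ := ⟨he.aemeasurable, hed⟩
  have hse : IndepFun s e μ := hindep.indepFun (by decide : (1 : Fin 3) ≠ 2)
  have hfse : IndepFun f (fun ω ↦ s ω + e ω) μ :=
    (hindep.indepFun_prodMk (fun i ↦ by fin_cases i <;> assumption) 1 2 0 (by decide)
      (by decide)).symm.comp measurable_id measurable_add
  have hsum := hse.hasLaw_add_gaussianReal hs' he'
  rw [add_zero] at hsum
  set A := (fun ω ↦ s ω + e ω) ⁻¹' Ici τ₁
  have hnum_f : ∫ ω in A, f ω ∂μ = 0 := by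
    rw [hfse.setIntegral_preimage hf.aestronglyMeasurable (hs.add he) measurableSet_Ici,
      hf'.integral_eq, integral_id_gaussianReal, zero_mul]
  have hnum_s : ∫ ω in A, s ω ∂μ = (σs ^ 2).toNNReal * gaussianPDFReal 0 v τ₁ := by
    rw [hse.setIntegral_preimage_add_of_gaussianReal hs he hs' he' hv measurableSet_Ici,
      setIntegral_Ici_id_gaussianReal hv, NNReal.coe_add]
    field_simp
  have hden : μ.real A = stdCcdf (τ₁ / √v) :=
    (hsum.measureReal_eq (p := (τ₁ ≤ ·)) measurableSet_Ici).trans (measureReal_gaussianReal_Ici hv τ₁)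
  rw [condMean, ← measureReal_def, show {ω | τ₁ ≤ s ω + e ω} = A from rfl,
    integral_add (hf'.hasGaussianLaw.integrable.integrableOn.const_mul α)
      (hs'.hasGaussianLaw.integrable.integrableOn.const_mul (1 - α)),
    integral_const_mul, integral_const_mul, hnum_f, hnum_s, hden, hazard,
    gaussianPDFReal_zero_eq_stdPdf]
  simp only [v, NNReal.coe_add, Real.coe_toNNReal _ (sq_nonneg _)]
  ring

/-- When the selection process is delegated to the agent with threshold `τ₁`, the expected
quality `t = α·f + (1-α)·s` of a selected applicant (conditional on `s̃ = s + ε_s ≥ τ₁`)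
equals `((1-α)·σ_s²/σ_s̃)·H(τ₁/σ_s̃)`. -/
theorem delegated_expected_quality
    {Ω : Type*} [MeasurableSpace Ω] (μ : Measure Ω) [IsProbabilityMeasure μ]
    (f s e : Ω → ℝ) (hf : Measurable f) (hs : Measurable s) (he : Measurable e)
    (σf σs σe α τ₁ : ℝ) (hσf : 0 < σf) (hσs : 0 < σs) (hσe : 0 ≤ σe)
    (hα : α ∈ Set.Icc (0 : ℝ) 1)
    (hindep : iIndepFun ![f, s, e] μ)
    (hfd : μ.map f = gaussianReal 0 ((σf ^ 2).toNNReal))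
    (hsd : μ.map s = gaussianReal 0 ((σs ^ 2).toNNReal))
    (hed : μ.map e = gaussianReal 0 ((σe ^ 2).toNNReal)) :
    condMean μ (fun ω => α * f ω + (1 - α) * s ω) {ω | τ₁ ≤ s ω + e ω}
      = ((1 - α) * σs ^ 2 / Real.sqrt (σs ^ 2 + σe ^ 2))
        * hazard (τ₁ / Real.sqrt (σs ^ 2 + σe ^ 2)) :=
  delegated_expected_quality_general μ f s e hf hs he σf σs σe α τ₁ hσs hindep hfd hsd hed
end

section
/- For fixed τ₁ ∈ ℝ, the map α ↦ E[α·f + (1−α)·s | s̃ ≥ τ₁] is strictly monotonically decreasing in α on (0,1). -/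
/-!
Since `f` is centred and independent of `s̃ = s + e`, `E[f · 1_{s̃ ≥ τ₁}] = 0`, so the map is
`α ↦ (1 - α) · E[s | s̃ ≥ τ₁]` and it suffices that `E[s · 1_{s + e ≥ τ₁}] > 0`. Conditioning on
`e = y` turns this into `∫_{x ≥ τ₁ - y} x dN(0, σs²)`, which is positive for every `y`: for a
centred law charging every open set, `∫_{x ≥ c} x` is positive for `c > 0` because the integrand
is, and for `c ≤ 0` it equals `-∫_{x < c} x > 0`.
-/

open MeasureTheory ProbabilityTheory Real

open Set
open scoped NNReal

section Integrals

variable {α : Type*} [MeasurableSpace α] {ν : Measure α}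

theorem setIntegral_pos_of_forall_pos {g : α → ℝ} {t : Set α} (ht : MeasurableSet t)
    (hg : IntegrableOn g t ν) (hpos : ∀ x ∈ t, 0 < g x) (hν : ν t ≠ 0) :
    0 < ∫ x in t, g x ∂ν := by
  rw [setIntegral_pos_iff_support_of_nonneg_ae
    ((ae_restrict_mem ht).mono fun x hx => (hpos x hx).le) hg]
  have hsupp : t ⊆ Function.support g := fun x hx => (hpos x hx).ne'
  rwa [inter_eq_right.2 hsupp, pos_iff_ne_zero]

theorem integral_pos_of_forall_pos [NeZero ν] {g : α → ℝ} (hg : Integrable g ν)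
    (hpos : ∀ x, 0 < g x) : 0 < ∫ x, g x ∂ν := by
  simpa using setIntegral_pos_of_forall_pos MeasurableSet.univ hg.integrableOn
    (fun x _ => hpos x) (NeZero.ne _)

end Integrals

theorem setIntegral_Ici_id_pos {ν : Measure ℝ} [ν.IsOpenPosMeasure]
    (hint : Integrable id ν) (hmean : ∫ x, x ∂ν = 0) (c : ℝ) :
    0 < ∫ x in Ici c, x ∂ν := by
  rcases lt_or_ge 0 c with hc | hc
  · exact setIntegral_pos_of_forall_pos measurableSet_Ici hint.integrableOn
      (fun x hx => hc.trans_le hx) ((isOpen_Ioi.measure_pos ν nonempty_Ioi).trans_le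
        (measure_mono Ioi_subset_Ici_self)).ne'
  · have hlow : 0 < ∫ x in Iio c, -x ∂ν :=
      setIntegral_pos_of_forall_pos measurableSet_Iio hint.neg.integrableOn
        (fun x hx => neg_pos.2 ((mem_Iio.1 hx).trans_le hc))
        (isOpen_Iio.measure_pos ν nonempty_Iio).ne'
    rw [integral_neg, ← compl_Ici, setIntegral_compl measurableSet_Ici (f := fun x => x) hint]
      at hlow
    linarith

namespace ProbabilityTheory

variable {Ω : Type*} [MeasurableSpace Ω] {μ : Measure Ω}

theorem integrable_of_map_eq_gaussianReal {X : Ω → ℝ} (hX : Measurable X) {m : ℝ} {v : ℝ≥0}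
    (hmap : μ.map X = gaussianReal m v) : Integrable X μ := by
  have h : Integrable id (μ.map X) := hmap ▸ (memLp_id_gaussianReal 1).integrable le_rfl
  exact (integrable_map_measure aestronglyMeasurable_id hX.aemeasurable).1 h

theorem integral_eq_of_map_eq_gaussianReal {X : Ω → ℝ} (hX : Measurable X) {m : ℝ} {v : ℝ≥0}
    (hmap : μ.map X = gaussianReal m v) : ∫ ω, X ω ∂μ = m := by
  rw [← integral_id_gaussianReal (μ := m) (v := v), ← hmap,
    integral_map hX.aemeasurable (f := fun x => x) aestronglyMeasurable_id]

theorem IndepFun.setIntegral_preimage_eq_mul {β : Type*} [MeasurableSpace β] {Z : Ω → β}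
    {X : Ω → ℝ} (hZ : Measurable Z) (hX : Measurable X) (hZX : IndepFun Z X μ) {t : Set β}
    (ht : MeasurableSet t) : ∫ ω in Z ⁻¹' t, X ω ∂μ = μ.real (Z ⁻¹' t) * ∫ ω, X ω ∂μ :=
  ((IndepFun_iff_Indep _ _ _).1 hZX).setIntegral_eq_mul (f := id) hZ.comap_le hX.aemeasurable
    ⟨t, ht, rfl⟩ aestronglyMeasurable_id

theorem IndepFun.setIntegral_setOf_le_add_pos [IsProbabilityMeasure μ] {X Y : Ω → ℝ}
    (hX : Measurable X) (hY : Measurable Y) (hXY : IndepFun X Y μ) (hint : Integrable X μ)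
    (hmean : ∫ ω, X ω ∂μ = 0) [(μ.map X).IsOpenPosMeasure] (τ : ℝ) :
    0 < ∫ ω in {ω | τ ≤ X ω + Y ω}, X ω ∂μ := by
  set B : Set (ℝ × ℝ) := {p | τ ≤ p.1 + p.2}
  have hB : MeasurableSet B := measurableSet_le measurable_const (measurable_fst.add measurable_snd)
  set g : ℝ × ℝ → ℝ := B.indicator Prod.fst
  have hg : Measurable g := measurable_fst.indicator hB
  have hXYm : Measurable fun ω => (X ω, Y ω) := hX.prodMk hY
  have hA : MeasurableSet {ω | τ ≤ X ω + Y ω} := hXYm hB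
  have hgXY : (fun ω => g (X ω, Y ω)) = {ω | τ ≤ X ω + Y ω}.indicator X := rfl
  have hmap : μ.map (fun ω => (X ω, Y ω)) = (μ.map X).prod (μ.map Y) :=
    (indepFun_iff_map_prod_eq_prod_map_map hX.aemeasurable hY.aemeasurable).1 hXY
  have hgint : Integrable g ((μ.map X).prod (μ.map Y)) := by
    rw [← hmap, integrable_map_measure hg.aestronglyMeasurable hXYm.aemeasurable]
    change Integrable (fun ω => g (X ω, Y ω)) μ
    rw [hgXY]
    exact hint.indicator hA
  have hXint : Integrable id (μ.map X) :=
    (integrable_map_measure aestronglyMeasurable_id hX.aemeasurable).2 hint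
  have hXmean : ∫ x, x ∂(μ.map X) = 0 := by
    rw [integral_map hX.aemeasurable (f := fun x => x) aestronglyMeasurable_id, hmean]
  have hinner (y : ℝ) : 0 < ∫ x, g (x, y) ∂(μ.map X) := by
    have hslice : ∫ x, g (x, y) ∂(μ.map X) = ∫ x in Ici (τ - y), x ∂(μ.map X) := by
      rw [← integral_indicator measurableSet_Ici]
      congr 1 with x
      simp [g, B, indicator]
    rw [hslice]
    exact setIntegral_Ici_id_pos hXint hXmean _
  have := Measure.isProbabilityMeasure_map (μ := μ) hY.aemeasurable
  calc 0 < ∫ y, ∫ x, g (x, y) ∂(μ.map X) ∂(μ.map Y) :=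
        integral_pos_of_forall_pos hgint.integral_prod_right hinner
    _ = ∫ p, g p ∂((μ.map X).prod (μ.map Y)) := (integral_prod_symm g hgint).symm
    _ = ∫ ω, g (X ω, Y ω) ∂μ := by
        rw [← hmap, integral_map hXYm.aemeasurable hg.aestronglyMeasurable]
    _ = ∫ ω in {ω | τ ≤ X ω + Y ω}, X ω ∂μ := by rw [hgXY, integral_indicator hA]

end ProbabilityTheory

section CondMean

variable {Ω : Type*} [MeasurableSpace Ω] {μ : Measure Ω} {A : Set Ω}

theorem condMean_mul_add_mul {X Y : Ω → ℝ} (hX : IntegrableOn X A μ) (hY : IntegrableOn Y A μ)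
    (a b : ℝ) :
    condMean μ (fun ω => a * X ω + b * Y ω) A = a * condMean μ X A + b * condMean μ Y A := by
  simp only [condMean]
  rw [integral_add (hX.const_mul a) (hY.const_mul b), integral_const_mul, integral_const_mul]
  ring

theorem condMean_pos [IsFiniteMeasure μ] {X : Ω → ℝ} (h : 0 < ∫ ω in A, X ω ∂μ) :
    0 < condMean μ X A := by
  have hA : μ A ≠ 0 := fun hA => by simp [Measure.restrict_eq_zero.2 hA] at h
  exact div_pos h (ENNReal.toReal_pos hA (measure_ne_top μ A))

end CondMean

theorem delegated_utility_strictAnti_in_alpha_general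
    {Ω : Type*} [MeasurableSpace Ω] (μ : Measure Ω) [IsProbabilityMeasure μ]
    (f s e : Ω → ℝ) (hf : Measurable f) (hs : Measurable s) (he : Measurable e)
    (σf σs τ₁ : ℝ) (hσs : 0 < σs)
    (hindep : iIndepFun ![f, s, e] μ)
    (hfd : μ.map f = gaussianReal 0 ((σf ^ 2).toNNReal))
    (hsd : μ.map s = gaussianReal 0 ((σs ^ 2).toNNReal)) :
    StrictAntiOn (fun α : ℝ =>
      condMean μ (fun ω => α * f ω + (1 - α) * s ω) {ω | τ₁ ≤ s ω + e ω})
      (Set.Ioo (0 : ℝ) 1) := by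
  set A := {ω | τ₁ ≤ s ω + e ω}
  have hmeas : ∀ i, Measurable (![f, s, e] i) := by
    intro i; fin_cases i <;> assumption
  have hf_zero : condMean μ f A = 0 := by
    have hind : IndepFun (fun ω => (s ω, e ω)) f μ :=
      hindep.indepFun_prodMk hmeas 1 2 0 (by decide) (by decide)
    set B : Set (ℝ × ℝ) := {p | τ₁ ≤ p.1 + p.2}
    have hB : MeasurableSet B :=
      measurableSet_le measurable_const (measurable_fst.add measurable_snd)
    have hAB : A = (fun ω => (s ω, e ω)) ⁻¹' B := rfl
    rw [condMean, hAB, hind.setIntegral_preimage_eq_mul (hs.prodMk he) hf hB,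
      integral_eq_of_map_eq_gaussianReal hf hfd, mul_zero, zero_div]
  have hs_pos : 0 < condMean μ s A := by
    have : (μ.map s).IsOpenPosMeasure := hsd ▸
      (gaussianReal_absolutelyContinuous' 0 (by simpa using hσs.ne')).isOpenPosMeasure
    have hse : IndepFun s e μ := hindep.indepFun (show (1 : Fin 3) ≠ 2 by decide)
    exact condMean_pos <| hse.setIntegral_setOf_le_add_pos hs he
      (integrable_of_map_eq_gaussianReal hs hsd) (integral_eq_of_map_eq_gaussianReal hs hsd) τ₁
  intro a _ b _ hab
  simp only [condMean_mul_add_mul (integrable_of_map_eq_gaussianReal hf hfd).integrableOn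
    (integrable_of_map_eq_gaussianReal hs hsd).integrableOn, hf_zero]
  nlinarith

/-- For fixed threshold `τ₁`, the principal's expected utility per applicant selected by the
agent, `α ↦ E[α·f + (1-α)·s | s̃ ≥ τ₁]`, is strictly decreasing in `α` on `(0,1)`. -/
theorem delegated_utility_strictAnti_in_alpha
    {Ω : Type*} [MeasurableSpace Ω] (μ : Measure Ω) [IsProbabilityMeasure μ]
    (f s e : Ω → ℝ) (hf : Measurable f) (hs : Measurable s) (he : Measurable e)
    (σf σs σe τ₁ : ℝ) (hσf : 0 < σf) (hσs : 0 < σs) (hσe : 0 ≤ σe)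
    (hindep : iIndepFun ![f, s, e] μ)
    (hfd : μ.map f = gaussianReal 0 ((σf ^ 2).toNNReal))
    (hsd : μ.map s = gaussianReal 0 ((σs ^ 2).toNNReal))
    (hed : μ.map e = gaussianReal 0 ((σe ^ 2).toNNReal)) :
    StrictAntiOn (fun α : ℝ =>
      condMean μ (fun ω => α * f ω + (1 - α) * s ω) {ω | τ₁ ≤ s ω + e ω})
      (Set.Ioo (0 : ℝ) 1) :=
  delegated_utility_strictAnti_in_alpha_general μ f s e hf hs he σf σs τ₁ hσs hindep hfd hsd
end

section
/- The standard normal hazard rate H satisfies H(x) ≥ x for all x ∈ ℝ, and H is monotonically increasing on ℝ (i.e., x ≤ y implies H(x) ≤ H(y)). -/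
open MeasureTheory ProbabilityTheory Real

/-!
Integrating `-φ'(u) = u φ(u)` over `(x, ∞)` gives `∫_x^∞ u φ(u) du = φ(x)`, and bounding `u` below by
`x` there yields the Mills inequality `x Φᶜ(x) ≤ φ(x)`, i.e. `x ≤ H(x)`. Since `φ' = -x φ` and
`(Φᶜ)' = -φ`, the hazard rate satisfies `H' = H (H - x)`, which is therefore nonnegative.
-/

open Filter Set Topology

lemma stdPdf_eq_gaussianPDFReal : stdPdf = gaussianPDFReal 0 1 := by
  ext x
  simp [stdPdf, gaussianPDFReal]

lemma stdPdf_pos (x : ℝ) : 0 < stdPdf x :=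
  stdPdf_eq_gaussianPDFReal ▸ gaussianPDFReal_pos 0 1 x one_ne_zero

lemma integrable_stdPdf : Integrable stdPdf :=
  stdPdf_eq_gaussianPDFReal ▸ integrable_gaussianPDFReal 0 1

lemma integral_stdPdf : ∫ x, stdPdf x = 1 :=
  stdPdf_eq_gaussianPDFReal ▸ integral_gaussianPDFReal_eq_one 0 one_ne_zero

lemma continuous_stdPdf : Continuous stdPdf := by
  unfold stdPdf
  fun_prop

lemma hasDerivAt_stdPdf (x : ℝ) : HasDerivAt stdPdf (-x * stdPdf x) x := by
  have h : HasDerivAt (fun y : ℝ => -(y ^ 2) / 2) (-x) x :=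
    ((hasDerivAt_pow 2 x).neg.div_const 2).congr_deriv (by ring)
  exact (h.exp.const_mul (√(2 * π))⁻¹).congr_deriv (by rw [stdPdf]; ring)

lemma tendsto_stdPdf_atTop : Tendsto stdPdf atTop (𝓝 0) := by
  have h : Tendsto (fun x : ℝ => -(x ^ 2) / 2) atTop atBot :=
    (tendsto_neg_atTop_atBot.comp (tendsto_pow_atTop two_ne_zero)).atBot_div_const two_pos
  have := (tendsto_exp_atBot.comp h).const_mul (√(2 * π))⁻¹
  rwa [mul_zero] at this

lemma integrable_mul_stdPdf : Integrable fun x => x * stdPdf x := by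
  convert (integrable_mul_exp_neg_mul_sq (b := 1 / 2) one_half_pos).const_mul (√(2 * π))⁻¹
    using 2 with x
  rw [stdPdf]
  ring_nf

lemma integral_Ioi_mul_stdPdf (x : ℝ) : ∫ u in Ioi x, u * stdPdf u = stdPdf x := by
  have h := integral_Ioi_of_hasDerivAt_of_tendsto' (a := x) (f := fun u => -stdPdf u)
    (f' := fun u => u * stdPdf u)
    (fun u _ => (hasDerivAt_stdPdf u).neg.congr_deriv (by ring))
    integrable_mul_stdPdf.integrableOn tendsto_stdPdf_atTop.neg
  simpa using h

lemma stdCcdf_eq_integral_Ioi (x : ℝ) : stdCcdf x = ∫ u in Ioi x, stdPdf u := by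
  rw [stdCcdf, stdCdf, ← integral_stdPdf,
    ← intervalIntegral.integral_Iic_add_Ioi integrable_stdPdf.integrableOn
      integrable_stdPdf.integrableOn]
  ring

lemma stdCcdf_pos (x : ℝ) : 0 < stdCcdf x := by
  rw [stdCcdf_eq_integral_Ioi, setIntegral_pos_iff_support_of_nonneg_ae (ae_of_all _ fun u => (stdPdf_pos u).le)
    integrable_stdPdf.integrableOn]
  simp [Function.support, (stdPdf_pos _).ne']

lemma mul_stdCcdf_le_stdPdf (x : ℝ) : x * stdCcdf x ≤ stdPdf x := by
  rw [stdCcdf_eq_integral_Ioi, ← integral_const_mul, ← integral_Ioi_mul_stdPdf x]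
  refine setIntegral_mono_on (integrable_stdPdf.const_mul x).integrableOn
    integrable_mul_stdPdf.integrableOn measurableSet_Ioi fun u hu => ?_
  exact mul_le_mul_of_nonneg_right (le_of_lt hu) (stdPdf_pos u).le

lemma hasDerivAt_stdCdf (x : ℝ) : HasDerivAt stdCdf (stdPdf x) x := by
  have h := (continuous_stdPdf.integral_hasStrictDerivAt 0 x).hasDerivAt.const_add (stdCdf 0)
  refine h.congr_of_eventuallyEq (Eventually.of_forall fun y => ?_)
  show stdCdf y = stdCdf 0 + ∫ u in (0 : ℝ)..y, stdPdf u
  rw [← intervalIntegral.integral_Iic_sub_Iic integrable_stdPdf.integrableOn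
    integrable_stdPdf.integrableOn, stdCdf, stdCdf]
  ring

lemma hasDerivAt_stdCcdf (x : ℝ) : HasDerivAt stdCcdf (-stdPdf x) x :=
  (hasDerivAt_stdCdf x).const_sub 1

lemma hasDerivAt_hazard (x : ℝ) : HasDerivAt hazard (hazard x * (hazard x - x)) x := by
  have h := (hasDerivAt_stdPdf x).div (hasDerivAt_stdCcdf x) (stdCcdf_pos x).ne'
  exact h.congr_deriv (by rw [hazard]; field_simp [(stdCcdf_pos x).ne']; ring)

lemma hazard_pos (x : ℝ) : 0 < hazard x :=
  div_pos (stdPdf_pos x) (stdCcdf_pos x)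

lemma self_le_hazard (x : ℝ) : x ≤ hazard x :=
  (le_div_iff₀ (stdCcdf_pos x)).2 (mul_stdCcdf_le_stdPdf x)

/-- The standard normal hazard rate `H(x) = φ(x)/Φᶜ(x)` satisfies `H(x) ≥ x` for all `x`,
and `H` is monotonically increasing on `ℝ`. -/
theorem hazard_ge_self_and_monotone :
    (∀ x : ℝ, x ≤ hazard x) ∧ Monotone hazard :=
  ⟨self_le_hazard, monotone_of_hasDerivAt_nonneg hasDerivAt_hazard fun x =>
    mul_nonneg (hazard_pos x).le (sub_nonneg.2 (self_le_hazard x))⟩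
end
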